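/- Let V be a finite-dimensional real Lie algebra, Ω₀ a 2-cocycle on V (an alternating bilinear form with Ω₀([x,y],z) + Ω₀([y,z],x) + Ω₀([z,x],y) = 0), and α, β : V → V commuting derivations of V (α∘β = β∘α). For h ∈ ℝ define the bilinear form Ω_h(x,y) := ∫₀ʰ Ω₀( exp(s(α+β))(exp(−hβ) x), exp(s(α+β))(exp(−hβ) y) ) ds, where exp denotes the exponential of linear endomorphisms of V. Then for every h ∈ ℝ, Ω_h is again an alternating bilinear form on V satisfying the 2-cocycle condition Ω_h([x,y],z) + Ω_h([y,z],x) + Ω_h([z,x],y) = 0. -/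

import Mathlib

set_option maxHeartbeats 1000000
set_option synthInstance.maxHeartbeats 400000


open scoped BigOperators

/-- The exponential of a linear endomorphism of a finite-dimensional real normed space. -/
noncomputable def expEnd (V : Type*) [NormedAddCommGroup V] [NormedSpace ℝ V]
    [FiniteDimensional ℝ V] (f : V →ₗ[ℝ] V) : V →L[ℝ] V :=
  NormedSpace.exp (LinearMap.toContinuousLinearMap f)

/-- The deformed form Ω_h(x,y) = ∫₀ʰ Ω₀(e^{s(α+β)} e^{−hβ} x, e^{s(α+β)} e^{−hβ} y) ds. -/
noncomputable def OmegaDef (V : Type*) [NormedAddCommGroup V] [NormedSpace ℝ V]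
    [FiniteDimensional ℝ V] (Ω₀ : V →ₗ[ℝ] V →ₗ[ℝ] ℝ) (α β : V →ₗ[ℝ] V) (h : ℝ)
    (x y : V) : ℝ :=
  ∫ s in (0 : ℝ)..h,
    Ω₀ (expEnd V (s • (α + β)) (expEnd V ((-h) • β) x))
       (expEnd V (s • (α + β)) (expEnd V ((-h) • β) y))

section Aux

variable (V : Type*) [NormedAddCommGroup V] [NormedSpace ℝ V] [FiniteDimensional ℝ V]

/-- Continuize a bilinear map out of a finite-dimensional space. -/
noncomputable def clm2 {W : Type*} [NormedAddCommGroup W] [NormedSpace ℝ W]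
    (B : V →ₗ[ℝ] V →ₗ[ℝ] W) : V →L[ℝ] V →L[ℝ] W :=
  LinearMap.toContinuousLinearMap
    { toFun := fun x => LinearMap.toContinuousLinearMap (B x)
      map_add' := fun a b => by ext v; simp
      map_smul' := fun c a => by ext v; simp }

@[simp] lemma clm2_apply {W : Type*} [NormedAddCommGroup W] [NormedSpace ℝ W]
    (B : V →ₗ[ℝ] V →ₗ[ℝ] W) (x y : V) : clm2 V B x y = B x y := by
  simp [clm2]

lemma cont_exp_apply (C : V →L[ℝ] V) (x : V) :
    Continuous fun s : ℝ => NormedSpace.exp (s • C) x := by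
  let +nondep : NormedAlgebra ℚ (V →L[ℝ] V) := .restrictScalars ℚ ℝ (V →L[ℝ] V)
  exact ((NormedSpace.exp_continuous).comp (continuous_id.smul continuous_const)).clm_apply
    continuous_const

lemma hasDerivAt_exp_apply (C : V →L[ℝ] V) (x : V) (t : ℝ) :
    HasDerivAt (fun s : ℝ => NormedSpace.exp (s • C) x)
      (C (NormedSpace.exp (t • C) x)) t := by
  have h1 := hasDerivAt_exp_smul_const' (𝕂 := ℝ) C t
  have := h1.clm_apply (hasDerivAt_const t x)
  simpa using this

lemma exp_bracket (bracket : V →ₗ[ℝ] V →ₗ[ℝ] V) (D : V →ₗ[ℝ] V)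
    (hD : ∀ x y : V, D (bracket x y) = bracket (D x) y + bracket x (D y)) (t : ℝ) (x y : V) :
    expEnd V (t • D) (bracket x y) = bracket (expEnd V (t • D) x) (expEnd V (t • D) y) := by
  set A : V →L[ℝ] V := LinearMap.toContinuousLinearMap D with hA
  have hAapp : ∀ v : V, A v = D v := fun v => rfl
  have hexpEnd : ∀ s : ℝ, expEnd V (s • D) = NormedSpace.exp (s • A) := by
    intro s
    simp [expEnd, hA, map_smul]
  set Bc : V →L[ℝ] V →L[ℝ] V := clm2 V bracket with hBc
  set g : ℝ → V := fun s =>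
    NormedSpace.exp (s • (-A)) (Bc (NormedSpace.exp (s • A) x) (NormedSpace.exp (s • A) y))
    with hg
  have commAE : ∀ s : ℝ, Commute A (NormedSpace.exp (s • (-A))) := by
    intro s
    exact (((Commute.refl A).neg_right).smul_right s).exp_right
  have hderiv : ∀ s : ℝ, HasDerivAt g 0 s := by
    intro s
    set u : V := NormedSpace.exp (s • A) x
    set v : V := NormedSpace.exp (s • A) y
    have hu : HasDerivAt (fun r : ℝ => NormedSpace.exp (r • A) x) (A u) s :=
      hasDerivAt_exp_apply V A x s
    have hv : HasDerivAt (fun r : ℝ => NormedSpace.exp (r • A) y) (A v) s :=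
      hasDerivAt_exp_apply V A y s
    have hBu : HasDerivAt (fun r : ℝ => Bc (NormedSpace.exp (r • A) x)) (Bc (A u)) s :=
      Bc.hasFDerivAt.comp_hasDerivAt s hu
    have hinner : HasDerivAt
        (fun r : ℝ => Bc (NormedSpace.exp (r • A) x) (NormedSpace.exp (r • A) y))
        (Bc (A u) v + Bc u (A v)) s := hBu.clm_apply hv
    have houter := hasDerivAt_exp_smul_const' (𝕂 := ℝ) (-A) s
    have htotal := houter.clm_apply hinner
    have key : ((-A) * NormedSpace.exp (s • (-A))) (Bc u v)
        + NormedSpace.exp (s • (-A)) (Bc (A u) v + Bc u (A v)) = 0 := by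
      have hcomm : (-A) * NormedSpace.exp (s • (-A))
          = NormedSpace.exp (s • (-A)) * (-A) := ((commAE s).neg_left).eq
      have hder : A (Bc u v) = Bc (A u) v + Bc u (A v) := by
        simp only [hBc, clm2_apply, hAapp]
        exact hD u v
      rw [hcomm]
      simp only [ContinuousLinearMap.mul_apply, ContinuousLinearMap.neg_apply, hder]
      simp only [map_add, map_neg]
      abel
    rw [key] at htotal
    exact htotal
  have hgconst : ∀ s : ℝ, g s = g 0 := by
    intro s
    exact is_const_of_deriv_eq_zero (fun r => (hderiv r).differentiableAt)
      (fun r => (hderiv r).deriv) s 0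
  have hg0 : g 0 = bracket x y := by
    simp [hg, hBc, NormedSpace.exp_zero]
  have hgt := (hgconst t).trans hg0
  -- apply exp (t • A) to both sides
  have hinv : NormedSpace.exp (t • A) * NormedSpace.exp (t • (-A)) = 1 := by
    let +nondep : NormedAlgebra ℚ (V →L[ℝ] V) := .restrictScalars ℚ ℝ (V →L[ℝ] V)
    rw [← NormedSpace.exp_add_of_commute ((((Commute.refl A).neg_right).smul_left t).smul_right t)]
    simp [NormedSpace.exp_zero]
  have := congrArg (fun w => NormedSpace.exp (t • A) w) hgt
  simp only [hg] at this
  rw [show NormedSpace.exp (t • A) (NormedSpace.exp (t • (-A))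
      (Bc (NormedSpace.exp (t • A) x) (NormedSpace.exp (t • A) y)))
      = (NormedSpace.exp (t • A) * NormedSpace.exp (t • (-A)))
        (Bc (NormedSpace.exp (t • A) x) (NormedSpace.exp (t • A) y)) from rfl, hinv] at this
  simp only [ContinuousLinearMap.one_apply, clm2_apply] at this
  rw [hexpEnd t, ← this]
  rfl

end Aux

/-- Let V be a finite-dimensional real Lie algebra (a vector space with an
alternating bilinear bracket satisfying Jacobi), Ω₀ a 2-cocycle on V, and α, β commuting
derivations of V.  Then for every h ∈ ℝ the deformed form Ω_h is again an alternating
bilinear form on V satisfying the 2-cocycle condition. -/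
theorem statement8 (V : Type*) [NormedAddCommGroup V] [NormedSpace ℝ V]
    [FiniteDimensional ℝ V]
    (bracket : V →ₗ[ℝ] V →ₗ[ℝ] V)
    (hbalt : ∀ x : V, bracket x x = 0)
    (hbjacobi : ∀ x y z : V,
      bracket (bracket x y) z + bracket (bracket y z) x + bracket (bracket z x) y = 0)
    (Ω₀ : V →ₗ[ℝ] V →ₗ[ℝ] ℝ)
    (hΩ₀alt : ∀ x : V, Ω₀ x x = 0)
    (hΩ₀cocycle : ∀ x y z : V,
      Ω₀ (bracket x y) z + Ω₀ (bracket y z) x + Ω₀ (bracket z x) y = 0)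
    (α β : V →ₗ[ℝ] V)
    (hα : ∀ x y : V, α (bracket x y) = bracket (α x) y + bracket x (α y))
    (hβ : ∀ x y : V, β (bracket x y) = bracket (β x) y + bracket x (β y))
    (hαβ : α ∘ₗ β = β ∘ₗ α) :
    ∀ h : ℝ,
      -- bilinearity
      (∀ x y z : V, OmegaDef V Ω₀ α β h (x + y) z
          = OmegaDef V Ω₀ α β h x z + OmegaDef V Ω₀ α β h y z) ∧
      (∀ (t : ℝ) (x y : V), OmegaDef V Ω₀ α β h (t • x) y = t * OmegaDef V Ω₀ α β h x y) ∧
      (∀ x y z : V, OmegaDef V Ω₀ α β h x (y + z)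
          = OmegaDef V Ω₀ α β h x y + OmegaDef V Ω₀ α β h x z) ∧
      (∀ (t : ℝ) (x y : V), OmegaDef V Ω₀ α β h x (t • y) = t * OmegaDef V Ω₀ α β h x y) ∧
      -- alternating
      (∀ x : V, OmegaDef V Ω₀ α β h x x = 0) ∧
      -- 2-cocycle condition
      (∀ x y z : V,
        OmegaDef V Ω₀ α β h (bracket x y) z + OmegaDef V Ω₀ α β h (bracket y z) x
          + OmegaDef V Ω₀ α β h (bracket z x) y = 0) := by
  intro h
  set C : V →L[ℝ] V := LinearMap.toContinuousLinearMap (α + β) with hC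
  have hexp1 : ∀ s : ℝ, expEnd V (s • (α + β)) = NormedSpace.exp (s • C) := by
    intro s; simp [expEnd, hC, map_smul]
  have hcont : ∀ x y : V, Continuous fun s : ℝ =>
      Ω₀ (expEnd V (s • (α + β)) (expEnd V ((-h) • β) x))
         (expEnd V (s • (α + β)) (expEnd V ((-h) • β) y)) := by
    intro x y
    have hx := cont_exp_apply V C (expEnd V ((-h) • β) x)
    have hy := cont_exp_apply V C (expEnd V ((-h) • β) y)
    have key : Continuous fun s : ℝ =>
        clm2 V Ω₀ (NormedSpace.exp (s • C) (expEnd V ((-h) • β) x))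
          (NormedSpace.exp (s • C) (expEnd V ((-h) • β) y)) :=
      ((clm2 V Ω₀).continuous.comp hx).clm_apply hy
    simp only [clm2_apply] at key
    simp only [hexp1]
    exact key
  have hint : ∀ x y : V, IntervalIntegrable (fun s : ℝ =>
      Ω₀ (expEnd V (s • (α + β)) (expEnd V ((-h) • β) x))
         (expEnd V (s • (α + β)) (expEnd V ((-h) • β) y))) MeasureTheory.volume 0 h :=
    fun x y => (hcont x y).intervalIntegrable 0 h
  have haddder : ∀ x y : V, (α + β) (bracket x y)
      = bracket ((α + β) x) y + bracket x ((α + β) y) := by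
    intro x y
    simp only [LinearMap.add_apply, hα, hβ, map_add]
    abel
  have hbr : ∀ (s : ℝ) (x y : V),
      expEnd V (s • (α + β)) (expEnd V ((-h) • β) (bracket x y))
      = bracket (expEnd V (s • (α + β)) (expEnd V ((-h) • β) x))
                (expEnd V (s • (α + β)) (expEnd V ((-h) • β) y)) := by
    intro s x y
    rw [exp_bracket V bracket β hβ (-h) x y, exp_bracket V bracket (α + β) haddder s]
  refine ⟨?_, ?_, ?_, ?_, ?_, ?_⟩
  · intro x y z
    unfold OmegaDef
    rw [← intervalIntegral.integral_add (hint x z) (hint y z)]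
    congr 1; funext s; simp [map_add]
  · intro t x y
    unfold OmegaDef
    rw [← intervalIntegral.integral_const_mul]
    congr 1; funext s; simp [map_smul, smul_eq_mul]
  · intro x y z
    unfold OmegaDef
    rw [← intervalIntegral.integral_add (hint x y) (hint x z)]
    congr 1; funext s; simp [map_add]
  · intro t x y
    unfold OmegaDef
    rw [← intervalIntegral.integral_const_mul]
    congr 1; funext s; simp [map_smul, smul_eq_mul]
  · intro x
    unfold OmegaDef
    have : (fun s : ℝ => Ω₀ (expEnd V (s • (α + β)) (expEnd V ((-h) • β) x))
        (expEnd V (s • (α + β)) (expEnd V ((-h) • β) x))) = fun _ => (0 : ℝ) := by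
      funext s; exact hΩ₀alt _
    rw [this]; simp
  · intro x y z
    unfold OmegaDef
    rw [← intervalIntegral.integral_add (hint (bracket x y) z) (hint (bracket y z) x),
      ← intervalIntegral.integral_add ((hint (bracket x y) z).add (hint (bracket y z) x))
        (hint (bracket z x) y)]
    have : (fun s : ℝ =>
        Ω₀ (expEnd V (s • (α + β)) (expEnd V ((-h) • β) (bracket x y)))
           (expEnd V (s • (α + β)) (expEnd V ((-h) • β) z))
        + Ω₀ (expEnd V (s • (α + β)) (expEnd V ((-h) • β) (bracket y z)))
           (expEnd V (s • (α + β)) (expEnd V ((-h) • β) x))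
        + Ω₀ (expEnd V (s • (α + β)) (expEnd V ((-h) • β) (bracket z x)))
           (expEnd V (s • (α + β)) (expEnd V ((-h) • β) y))) = fun _ => (0 : ℝ) := by
      funext s
      rw [hbr s x y, hbr s y z, hbr s z x]
      exact hΩ₀cocycle _ _ _
    rw [this]; simp
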